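/- arXiv:2012.10132 — 2 statements merged into one kernel-verified Lean document; each statement's English description precedes it below -/
import Mathlib

section
/- Let r₁ < r₂ be real numbers and let a : ℝ → ℝ be a measurable function with supp a ⊆ [r₁,r₂], ‖a‖_∞ ≤ (∫_{r₁}^{r₂} |s| ds)^{-1}, and ∫_ℝ a(r)|r| dr = 0 (i.e. a is an atom of the Hardy space ℋ¹(ℝ, |r| dr)). Then for every ε ∈ (0,1], ∫_ε^{1/ε} (1/r) (∫_{-r}^{r} a(s)|s| ds) dr ≤ 1. -/
/-!
With `F r = ∫_{-r}^{r} a(s)|s| ds`, Fubini turns `∫_ε^{1/ε} F r dr / r` into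
`∫ a(s)|s| (log(1/ε) - log(c |s|)) ds`, where `c` is the projection onto `[ε, 1/ε]`.
Since `a(s)|s|` has mean zero, `log(1/ε)` may be replaced by `log(c M)` with
`M = max |r₁| |r₂|`; for `|s| ≤ M` the new weight lies between `0` and `log M - log |s|`,
because `log ∘ c ∘ exp` is monotone and `1`-Lipschitz. It remains to show
`∫_{r₁}^{r₂} |s| (log M - log |s|) ds ≤ ∫_{r₁}^{r₂} |s| ds`. The difference has an explicit
primitive `ψ`; as `r₂ = M` or `r₁ = -M`, this reduces to `|ψ| ≤ M²/4` on `[-M, M]`, which follows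
from `log x ≤ x - 1`.
-/

open MeasureTheory Set Filter

noncomputable def clampIcc (α β x : ℝ) : ℝ := min (max α x) β

section

variable {α β : ℝ}

lemma le_clampIcc (h : α ≤ β) (x : ℝ) : α ≤ clampIcc α β x :=
  le_min (le_max_left _ _) h

lemma clampIcc_le (x : ℝ) : clampIcc α β x ≤ β := min_le_right _ _

lemma clampIcc_mono : Monotone (clampIcc α β) :=
  fun _ _ h => min_le_min_right _ (max_le_max_left _ h)

lemma abs_log_clampIcc_le (hα : 0 < α) (h : α ≤ β) (x : ℝ) :
    |Real.log (clampIcc α β x)| ≤ max |Real.log α| |Real.log β| :=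
  abs_le_max_abs_abs (Real.log_le_log hα (le_clampIcc h x))
    (Real.log_le_log (hα.trans_le (le_clampIcc h x)) (clampIcc_le x))

lemma clampIcc_le_div_mul_clampIcc (hα : 0 < α) (h : α ≤ β) {x y : ℝ} (hx : 0 < x)
    (hxy : x ≤ y) : clampIcc α β y ≤ y / x * clampIcc α β x := by
  have hyx : 1 ≤ y / x := (one_le_div hx).2 hxy
  -- `(y / x) * clampIcc α β x` clamps `y` to `[(y / x) α, (y / x) β]`, an interval shifted upwards.
  rw [clampIcc, clampIcc, mul_min_of_nonneg _ _ (by positivity),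
    mul_max_of_nonneg _ _ (by positivity), div_mul_cancel₀ y hx.ne']
  exact min_le_min (max_le_max_right _ (le_mul_of_one_le_left hα.le hyx))
    (le_mul_of_one_le_left (hα.le.trans h) hyx)

lemma log_clampIcc_sub_log_clampIcc_le (hα : 0 < α) (h : α ≤ β) {x y : ℝ} (hx : 0 < x)
    (hxy : x ≤ y) :
    Real.log (clampIcc α β y) - Real.log (clampIcc α β x) ≤ Real.log y - Real.log x := by
  have hy : 0 < y := hx.trans_le hxy
  have hcx : 0 < clampIcc α β x := hα.trans_le (le_clampIcc h x)
  have hcy : 0 < clampIcc α β y := hα.trans_le (le_clampIcc h y)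
  have := Real.log_le_log hcy (clampIcc_le_div_mul_clampIcc hα h hx hxy)
  rw [Real.log_mul (div_pos hy hx).ne' hcx.ne', Real.log_div hy.ne' hx.ne'] at this
  linarith

lemma integral_Ioc_indicator_Ici_inv (hα : 0 < α) (c : ℝ) :
    ∫ r in Ioc α β, (Ici c).indicator (fun r => r⁻¹) r
      = Real.log β - Real.log (clampIcc α β c) := by
  rw [integral_indicator measurableSet_Ici, Measure.restrict_restrict measurableSet_Ici,
    ← setIntegral_congr_set ((Ioi_ae_eq_Ici (μ := volume) (a := c)).inter (ae_eq_refl (Ioc α β))),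
    inter_comm, Ioc_inter_Ioi]
  rcases le_or_gt (max α c) β with hle | hlt
  · have hpos : 0 < max α c := hα.trans_le (le_max_left _ _)
    rw [← intervalIntegral.integral_of_le hle, integral_inv_of_pos hpos (hpos.trans_le hle),
      Real.log_div (hpos.trans_le hle).ne' hpos.ne', clampIcc, min_eq_left hle]
  · rw [Ioc_eq_empty (not_lt.2 hlt.le), Measure.restrict_empty, integral_zero_measure, clampIcc,
      min_eq_right hlt.le, sub_self]

lemma integrable_inv_mul_indicator_Icc_neg {f : ℝ → ℝ} (hf : Integrable f) (hα : 0 < α) :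
    Integrable (Function.uncurry fun r s => r⁻¹ * (Icc (-r) r).indicator f s)
      ((volume.restrict (Ioc α β)).prod volume) := by
  have hmeas : AEStronglyMeasurable (Function.uncurry fun r s => r⁻¹ * (Icc (-r) r).indicator f s)
      ((volume.restrict (Ioc α β)).prod volume) := by
    have hF : (Function.uncurry fun r s => r⁻¹ * (Icc (-r) r).indicator f s)
        = fun z : ℝ × ℝ => z.1⁻¹ * {z : ℝ × ℝ | |z.2| ≤ z.1}.indicator (fun z => f z.2) z := by
      ext ⟨r, s⟩
      simp only [Function.uncurry_apply_pair, indicator_apply, mem_Icc, mem_ofPred_eq, abs_le]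
    rw [hF]
    exact measurable_fst.inv.aestronglyMeasurable.mul
      (hf.1.comp_snd.indicator (measurableSet_le measurable_snd.abs measurable_fst))
  refine Integrable.mono' ((integrable_const α⁻¹).mul_prod hf.norm) hmeas ?_
  filter_upwards [Measure.quasiMeasurePreserving_fst.ae (ae_restrict_mem measurableSet_Ioc)]
    with z hz
  rw [Function.uncurry_apply_pair, norm_mul, norm_inv, Real.norm_of_nonneg (hα.trans hz.1).le]
  exact mul_le_mul (inv_anti₀ hα hz.1.le) (norm_indicator_le_norm_self _ _) (norm_nonneg _)
    (inv_nonneg.2 hα.le)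

lemma integral_one_div_mul_integral_neg_eq {f : ℝ → ℝ} (hf : Integrable f) (hα : 0 < α)
    (h : α ≤ β) :
    ∫ r in α..β, (1 / r) * ∫ s in (-r)..r, f s
      = ∫ s, f s * (Real.log β - Real.log (clampIcc α β |s|)) := by
  have hinner : ∀ r ∈ Ioc α β, (1 / r) * ∫ s in (-r)..r, f s
      = ∫ s, r⁻¹ * (Icc (-r) r).indicator f s := by
    intro r hr
    rw [intervalIntegral.integral_of_le (by linarith [hα.trans hr.1]),
      ← integral_Icc_eq_integral_Ioc, ← integral_indicator measurableSet_Icc,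
      ← integral_const_mul, one_div]
  have hswap : ∀ s r, r⁻¹ * (Icc (-r) r).indicator f s
      = f s * (Ici |s|).indicator (fun r => r⁻¹) r := by
    intro s r
    simp only [indicator_apply, mem_Icc, mem_Ici, ← abs_le]
    split_ifs <;> ring
  rw [intervalIntegral.integral_of_le h, setIntegral_congr_fun measurableSet_Ioc hinner,
    integral_integral_swap (integrable_inv_mul_indicator_Icc_neg hf hα)]
  simp_rw [hswap, integral_const_mul, integral_Ioc_indicator_Ici_inv hα]

end

noncomputable def logWeightPrimitive (M t : ℝ) : ℝ :=
  t * |t| * (2 * (Real.log M - Real.log |t|) - 1) / 4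

namespace logWeightPrimitive

lemma hasDerivAt (M : ℝ) {t : ℝ} (ht : t ≠ 0) :
    HasDerivAt (logWeightPrimitive M) (|t| * (Real.log M - Real.log |t| - 1)) t := by
  have hlog : HasDerivAt (fun t => Real.log |t|) t⁻¹ t := by
    simpa only [Real.log_abs] using Real.hasDerivAt_log ht
  have := (((hasDerivAt_id t).mul (hasDerivAt_abs ht)).mul
    (((hlog.const_sub (Real.log M)).const_mul 2).sub_const 1)).div_const 4
  refine this.congr_deriv ?_
  simp only [Pi.mul_apply, id_eq]
  rw [mul_comm t (SignType.sign t : ℝ), sign_mul_self]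
  field_simp
  ring

lemma continuous (M : ℝ) : Continuous (logWeightPrimitive M) := by
  have h : logWeightPrimitive M
      = fun t => (t * |t| * (2 * Real.log M - 1) - 2 * t * (|t| * Real.log |t|)) / 4 := by
    ext t; rw [logWeightPrimitive]; ring
  rw [h]
  have := Real.continuous_mul_log.comp continuous_abs
  fun_prop

lemma self {M : ℝ} (hM : 0 ≤ M) : logWeightPrimitive M M = -(M ^ 2 / 4) := by
  rw [logWeightPrimitive, abs_of_nonneg hM, sub_self]; ring

lemma neg_self {M : ℝ} (hM : 0 ≤ M) : logWeightPrimitive M (-M) = M ^ 2 / 4 := by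
  rw [logWeightPrimitive, abs_neg, abs_of_nonneg hM, sub_self]; ring

lemma abs_le {M t : ℝ} (ht : |t| ≤ M) : |logWeightPrimitive M t| ≤ M ^ 2 / 4 := by
  rcases eq_or_ne t 0 with rfl | ht0
  · simp [logWeightPrimitive]; positivity
  have hu : 0 < |t| := abs_pos.2 ht0
  have hL : 0 ≤ Real.log M - Real.log |t| := sub_nonneg.2 (Real.log_le_log hu ht)
  have hL' : Real.log M - Real.log |t| ≤ M / |t| - 1 := by
    rw [← Real.log_div (hu.trans_le ht).ne' hu.ne']
    exact Real.log_le_sub_one_of_pos (div_pos (hu.trans_le ht) hu)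
  have hupper : |t| ^ 2 * (2 * (Real.log M - Real.log |t|) - 1) ≤ M ^ 2 := by
    have : |t| ^ 2 * (M / |t| - 1) = |t| * M - |t| ^ 2 := by field_simp
    nlinarith [sq_nonneg (M - |t|)]
  rw [logWeightPrimitive, abs_div, abs_mul, abs_mul, abs_abs,
    abs_of_pos (by norm_num : (0 : ℝ) < 4), ← sq, div_le_div_iff_of_pos_right (by norm_num)]
  rcases le_total 0 (2 * (Real.log M - Real.log |t|) - 1) with hX | hX
  · rwa [abs_of_nonneg hX]
  · rw [abs_of_nonpos hX]
    nlinarith [sq_abs t, abs_nonneg t]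

end logWeightPrimitive

lemma continuous_abs_mul_log_sub_log (M : ℝ) :
    Continuous fun s => |s| * (Real.log M - Real.log |s|) := by
  have h : (fun s => |s| * (Real.log M - Real.log |s|))
      = fun s => |s| * Real.log M - |s| * Real.log |s| := by
    ext s; ring
  rw [h]
  have := Real.continuous_mul_log.comp continuous_abs
  fun_prop

lemma integral_abs_mul_log_sub_log_sub_one (M p q : ℝ) :
    ∫ s in p..q, |s| * (Real.log M - Real.log |s| - 1)
      = logWeightPrimitive M q - logWeightPrimitive M p := by
  refine integral_eq_of_hasDerivAt_off_countable _ _ (countable_singleton 0)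
    (logWeightPrimitive.continuous M).continuousOn
    (fun t ht => logWeightPrimitive.hasDerivAt M ht.2) ?_
  exact (((continuous_abs_mul_log_sub_log M).sub continuous_abs).congr fun s => by
    simp only [Pi.sub_apply]; ring).intervalIntegrable p q

lemma integral_abs_mul_log_le_integral_abs {r₁ r₂ : ℝ} (h : r₁ ≤ r₂) :
    ∫ s in r₁..r₂, |s| * (Real.log (max |r₁| |r₂|) - Real.log |s|) ≤ ∫ s in r₁..r₂, |s| := by
  set M := max |r₁| |r₂|
  have h₁ : |r₁| ≤ M := le_max_left _ _
  have h₂ : |r₂| ≤ M := le_max_right _ _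
  have hψ : logWeightPrimitive M r₂ ≤ logWeightPrimitive M r₁ := by
    rcases le_or_gt 0 (r₁ + r₂) with hsum | hsum
    · have hr₂ : 0 ≤ r₂ := by linarith
      have hM : M = r₂ := by
        simp only [M, abs_of_nonneg hr₂]
        exact max_eq_right (abs_le.2 ⟨by linarith, h⟩)
      rw [hM] at h₁ ⊢
      rw [logWeightPrimitive.self hr₂]
      exact neg_le_of_abs_le (logWeightPrimitive.abs_le h₁)
    · have hr₁ : r₁ < 0 := by linarith
      have hM : M = -r₁ := by
        simp only [M, abs_of_neg hr₁]
        exact max_eq_left (abs_le.2 ⟨by linarith, by linarith⟩)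
      have hψ₁ := logWeightPrimitive.neg_self (M := -r₁) (by linarith)
      rw [neg_neg] at hψ₁
      rw [hM] at h₂ ⊢
      rw [hψ₁]
      exact le_of_abs_le (logWeightPrimitive.abs_le h₂)
  have hdiff : (∫ s in r₁..r₂, |s| * (Real.log M - Real.log |s|)) - ∫ s in r₁..r₂, |s|
      = logWeightPrimitive M r₂ - logWeightPrimitive M r₁ := by
    rw [← intervalIntegral.integral_sub
      ((continuous_abs_mul_log_sub_log M).intervalIntegrable _ _)
      (continuous_abs.intervalIntegrable _ _), ← integral_abs_mul_log_sub_log_sub_one]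
    congr 1; ext s; ring
  linarith

lemma integral_mul_sub_eq_of_integral_eq_zero {X : Type*} [MeasurableSpace X] {μ : Measure X}
    {f w : X → ℝ} (hf : Integrable f μ) (hfw : Integrable (fun x => f x * w x) μ)
    (h0 : ∫ x, f x ∂μ = 0) (c c' : ℝ) :
    ∫ x, f x * (c - w x) ∂μ = ∫ x, f x * (c' - w x) ∂μ := by
  simp_rw [mul_sub]
  rw [integral_sub (hf.mul_const c) hfw, integral_sub (hf.mul_const c') hfw,
    integral_mul_const, integral_mul_const, h0, zero_mul, zero_mul]

lemma integrable_mul_log_clampIcc_abs {f : ℝ → ℝ} {α β : ℝ} (hf : Integrable f) (hα : 0 < α)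
    (h : α ≤ β) : Integrable fun s => f s * Real.log (clampIcc α β |s|) :=
  hf.mul_bdd (Measurable.aestronglyMeasurable (by unfold clampIcc; fun_prop))
    (Eventually.of_forall fun s => abs_log_clampIcc_le hα h |s|)

lemma integrable_mul_abs_of_ae_bounded {a : ℝ → ℝ} {r₁ r₂ K : ℝ} (hmeas : Measurable a)
    (hsupp : ∀ᵐ s : ℝ, s ∉ Icc r₁ r₂ → a s = 0) (hbound : ∀ᵐ s : ℝ, |a s| ≤ K) :
    Integrable fun s => a s * |s| := by
  refine IntegrableOn.integrable_of_ae_notMem_eq_zero (s := Icc r₁ r₂) ?_ ?_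
  · refine Measure.integrableOn_of_bounded (M := K * max |r₁| |r₂|) measure_Icc_lt_top.ne
      (hmeas.mul measurable_id.abs).aestronglyMeasurable ?_
    filter_upwards [ae_restrict_mem measurableSet_Icc, ae_restrict_of_ae hbound] with s hs hbs
    rw [norm_mul, Real.norm_eq_abs, Real.norm_eq_abs, abs_abs]
    exact mul_le_mul hbs (abs_le_max_abs_abs hs.1 hs.2) (abs_nonneg _) ((abs_nonneg _).trans hbs)
  · filter_upwards [hsupp] with s hs hs'
    rw [hs hs', zero_mul]

lemma mul_abs_mul_log_clampIcc_sub_le {α β b K M s : ℝ} (hα : 0 < α) (h : α ≤ β)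
    (hb : |b| ≤ K) (hs : |s| ≤ M) :
    b * |s| * (Real.log (clampIcc α β M) - Real.log (clampIcc α β |s|))
      ≤ K * (|s| * (Real.log M - Real.log |s|)) := by
  rcases eq_or_ne s 0 with rfl | hs0
  · simp
  have hpos : 0 < |s| := abs_pos.2 hs0
  have hD : 0 ≤ Real.log (clampIcc α β M) - Real.log (clampIcc α β |s|) :=
    sub_nonneg.2 (Real.log_le_log (hα.trans_le (le_clampIcc h _)) (clampIcc_mono hs))
  calc b * |s| * (Real.log (clampIcc α β M) - Real.log (clampIcc α β |s|))
      ≤ |b| * |s| * (Real.log (clampIcc α β M) - Real.log (clampIcc α β |s|)) := by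
        gcongr; exact le_abs_self b
    _ ≤ K * |s| * (Real.log M - Real.log |s|) :=
        mul_le_mul (mul_le_mul_of_nonneg_right hb hpos.le)
          (log_clampIcc_sub_log_clampIcc_le hα h hpos hs) hD
          (mul_nonneg ((abs_nonneg b).trans hb) hpos.le)
    _ = K * (|s| * (Real.log M - Real.log |s|)) := by ring

lemma integral_mul_abs_mul_log_clampIcc_sub_le {a : ℝ → ℝ} {r₁ r₂ K α β : ℝ} (hr : r₁ ≤ r₂)
    (hα : 0 < α) (h : α ≤ β) (hmeas : Measurable a)
    (hsupp : ∀ᵐ s : ℝ, s ∉ Icc r₁ r₂ → a s = 0) (hbound : ∀ᵐ s : ℝ, |a s| ≤ K) :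
    ∫ s, a s * |s| * (Real.log (clampIcc α β (max |r₁| |r₂|)) - Real.log (clampIcc α β |s|))
      ≤ K * ∫ s in r₁..r₂, |s| * (Real.log (max |r₁| |r₂|) - Real.log |s|) := by
  set M := max |r₁| |r₂|
  have hf := integrable_mul_abs_of_ae_bounded hmeas hsupp hbound
  have hint : Integrable fun s =>
      a s * |s| * (Real.log (clampIcc α β M) - Real.log (clampIcc α β |s|)) :=
    ((hf.mul_const _).sub (integrable_mul_log_clampIcc_abs hf hα h)).congr
      (Eventually.of_forall fun s => by simp only [Pi.sub_apply]; ring)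
  rw [← intervalIntegral.integral_const_mul, intervalIntegral.integral_of_le hr,
    ← integral_Icc_eq_integral_Ioc, ← integral_indicator measurableSet_Icc]
  refine integral_mono_ae hint
    (((continuous_abs_mul_log_sub_log M).const_mul _).integrableOn_Icc.integrable_indicator
      measurableSet_Icc) ?_
  filter_upwards [hsupp, hbound] with s hs hbs
  by_cases hmem : s ∈ Icc r₁ r₂
  · rw [indicator_of_mem hmem]
    exact mul_abs_mul_log_clampIcc_sub_le hα h hbs (abs_le_max_abs_abs hmem.1 hmem.2)
  · simp [indicator_of_notMem hmem, hs hmem]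

/-- the basic estimate for atoms of the Hardy space `ℋ¹(ℝ, |r| dr)`. -/
theorem stmt4 (r₁ r₂ : ℝ) (h12 : r₁ < r₂) (a : ℝ → ℝ) (hmeas : Measurable a)
    (hsupp : ∀ᵐ s : ℝ, s ∉ Icc r₁ r₂ → a s = 0)
    (hbound : ∀ᵐ s : ℝ, |a s| ≤ (∫ s in r₁..r₂, |s|)⁻¹)
    (hzero : (∫ s : ℝ, a s * |s|) = 0) :
    ∀ ε : ℝ, 0 < ε → ε ≤ 1 →
      (∫ r in ε..(1/ε), (1/r) * ∫ s in (-r)..r, a s * |s|) ≤ 1 := by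
  intro ε hε hε1
  set C := ∫ s in r₁..r₂, |s|
  have hεβ : ε ≤ 1 / ε := hε1.trans (one_le_one_div hε hε1)
  have hf := integrable_mul_abs_of_ae_bounded hmeas hsupp hbound
  calc (∫ r in ε..(1/ε), (1/r) * ∫ s in (-r)..r, a s * |s|)
      = ∫ s, a s * |s| * (Real.log (1 / ε) - Real.log (clampIcc ε (1 / ε) |s|)) :=
        integral_one_div_mul_integral_neg_eq hf hε hεβ
    _ = ∫ s, a s * |s| * (Real.log (clampIcc ε (1 / ε) (max |r₁| |r₂|))
          - Real.log (clampIcc ε (1 / ε) |s|)) :=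
        integral_mul_sub_eq_of_integral_eq_zero hf (integrable_mul_log_clampIcc_abs hf hε hεβ)
          hzero _ _
    _ ≤ C⁻¹ * ∫ s in r₁..r₂, |s| * (Real.log (max |r₁| |r₂|) - Real.log |s|) :=
        integral_mul_abs_mul_log_clampIcc_sub_le h12.le hε hεβ hmeas hsupp hbound
    _ ≤ C⁻¹ * C := mul_le_mul_of_nonneg_left (integral_abs_mul_log_le_integral_abs h12.le)
        (inv_nonneg.2 (intervalIntegral.integral_nonneg h12.le fun _ _ => abs_nonneg _))
    _ ≤ 1 := inv_mul_le_one
end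

section
/- Let a < b be real numbers, I = [a,b], and let (X_n)_{n ∈ ℕ} be pairwise disjoint closed subsets of ℝ with I = ⋃_{n ∈ ℕ} X_n. Then there is at most one n ∈ ℕ such that X_n is non-empty; equivalently, I = X_m for some m and X_n = ∅ for all n ≠ m. -/
open Set

/-- If a closed set `Xp` meets `(x, y]` at `y` but misses `x`, and `Icc x y ⊆ K`, then
there is a point of `Xp` in `(x, y]` that is in the closure of `K \ Xp`. -/
lemma aux_inf {K Xp : Set ℝ} (hXp : IsClosed Xp) {x y : ℝ} (hxy : x < y)
    (hsub : Icc x y ⊆ K) (hyp : y ∈ Xp) (hxp : x ∉ Xp) :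
    ∃ z ∈ Ioc x y, z ∈ Xp ∧ z ∈ closure (K \ Xp) := by
  set S := Xp ∩ Icc x y with hS
  have hSne : S.Nonempty := ⟨y, hyp, le_of_lt hxy, le_refl y⟩
  have hSc : IsClosed S := hXp.inter isClosed_Icc
  have hSb : BddBelow S := ⟨x, fun w hw => hw.2.1⟩
  have hzS : sInf S ∈ S := hSc.csInf_mem hSne hSb
  set z := sInf S with hz
  have hzx : x < z := lt_of_le_of_ne hzS.2.1 (fun h => hxp (by rw [h]; exact hzS.1))
  refine ⟨z, ⟨hzx, hzS.2.2⟩, hzS.1, ?_⟩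
  rw [mem_closure_iff]
  intro o ho hzo
  rcases Metric.isOpen_iff.1 ho z hzo with ⟨δ, hδ, hball⟩
  set w := max ((x + z) / 2) (z - δ / 2) with hw
  have hwz : w < z := max_lt (by linarith) (by linarith)
  have hxw : x < w := lt_of_lt_of_le (by linarith) (le_max_left _ _)
  have hwy : w ≤ y := le_of_lt (lt_of_lt_of_le hwz hzS.2.2)
  have hwK : w ∈ K := hsub ⟨le_of_lt hxw, hwy⟩
  have hwXp : w ∉ Xp := fun hwp =>
    absurd (csInf_le hSb ⟨hwp, le_of_lt hxw, hwy⟩) (not_le.2 hwz)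
  refine ⟨w, hball ?_, hwK, hwXp⟩
  rw [Metric.mem_ball, Real.dist_eq, abs_lt]
  constructor
  · have : z - δ / 2 ≤ w := le_max_right _ _
    linarith
  · linarith

/-- Mirror image of `aux_inf`. -/
lemma aux_sup {K Xp : Set ℝ} (hXp : IsClosed Xp) {x y : ℝ} (hxy : y < x)
    (hsub : Icc y x ⊆ K) (hyp : y ∈ Xp) (hxp : x ∉ Xp) :
    ∃ z ∈ Ico y x, z ∈ Xp ∧ z ∈ closure (K \ Xp) := by
  set S := Xp ∩ Icc y x with hS
  have hSne : S.Nonempty := ⟨y, hyp, le_refl y, le_of_lt hxy⟩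
  have hSc : IsClosed S := hXp.inter isClosed_Icc
  have hSb : BddAbove S := ⟨x, fun w hw => hw.2.2⟩
  have hzS : sSup S ∈ S := hSc.csSup_mem hSne hSb
  set z := sSup S with hz
  have hzx : z < x := lt_of_le_of_ne hzS.2.2 (fun h => hxp (by rw [← h]; exact hzS.1))
  refine ⟨z, ⟨hzS.2.1, hzx⟩, hzS.1, ?_⟩
  rw [mem_closure_iff]
  intro o ho hzo
  rcases Metric.isOpen_iff.1 ho z hzo with ⟨δ, hδ, hball⟩
  set w := min ((x + z) / 2) (z + δ / 2) with hw
  have hwz : z < w := lt_min (by linarith) (by linarith)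
  have hxw : w < x := lt_of_le_of_lt (min_le_left _ _) (by linarith)
  have hwy : y ≤ w := le_of_lt (lt_of_le_of_lt hzS.2.1 hwz)
  have hwK : w ∈ K := hsub ⟨hwy, le_of_lt hxw⟩
  have hwXp : w ∉ Xp := fun hwp =>
    absurd (le_csSup hSb ⟨hwp, hwy, le_of_lt hxw⟩) (not_le.2 hwz)
  refine ⟨w, hball ?_, hwK, hwXp⟩
  rw [Metric.mem_ball, Real.dist_eq, abs_lt]
  constructor
  · linarith
  · have : w ≤ z + δ / 2 := min_le_right _ _
    linarith

lemma two_nonempty_false (a b : ℝ) (hab : a < b) (X : ℕ → Set ℝ)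
    (hclosed : ∀ n, IsClosed (X n))
    (hdisj : Pairwise (Function.onFun Disjoint X))
    (hcover : Icc a b = ⋃ n, X n)
    (m n : ℕ) (hmn : m ≠ n) (hm : (X m).Nonempty) (hn : (X n).Nonempty) : False := by
  classical
  have hXsub : ∀ k, X k ⊆ Icc a b := by
    intro k
    rw [hcover]
    exact subset_iUnion X k
  have hmem : ∀ x ∈ Icc a b, ∃ k, x ∈ X k := by
    intro x hx
    rw [hcover] at hx
    exact mem_iUnion.1 hx
  set F : ℕ → Set ℝ := fun k => X k ∩ closure (Icc a b \ X k) with hFdef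
  set Fs : Set ℝ := ⋃ k, F k with hFs
  -- Fs is closed
  have hFseq : Fs = Icc a b ∩ (⋃ k, (closure (Icc a b \ X k))ᶜ)ᶜ := by
    ext x
    constructor
    · rintro hx
      obtain ⟨j, hj⟩ := mem_iUnion.1 hx
      refine ⟨hXsub j hj.1, ?_⟩
      intro hxU
      obtain ⟨k, hk⟩ := mem_iUnion.1 hxU
      by_cases hkj : k = j
      · exact hk (hkj ▸ hj.2)
      · exact hk (subset_closure ⟨hXsub j hj.1, fun hxk => (hdisj hkj).le_bot ⟨hxk, hj.1⟩⟩)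
    · rintro ⟨hxK, hxU⟩
      obtain ⟨j, hj⟩ := hmem x hxK
      have : x ∈ closure (Icc a b \ X j) := by
        by_contra h
        exact hxU (mem_iUnion.2 ⟨j, h⟩)
      exact mem_iUnion.2 ⟨j, hj, this⟩
  have hFsc : IsClosed Fs := by
    rw [hFseq]
    exact isClosed_Icc.inter (isOpen_iUnion fun k => (isClosed_closure).isOpen_compl).isClosed_compl
  rcases eq_empty_or_nonempty Fs with hFe | hFne
  · -- connectedness contradiction
    have hopen : ∀ k, X k ⊆ (closure (Icc a b \ X k))ᶜ := by
      intro k x hx hcl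
      have : x ∈ Fs := mem_iUnion.2 ⟨k, hx, hcl⟩
      rw [hFe] at this
      exact this
    have hKU : ∀ k, ∀ x ∈ Icc a b, x ∈ (closure (Icc a b \ X k))ᶜ → x ∈ X k := by
      intro k x hxK hxc
      by_contra h
      exact hxc (subset_closure ⟨hxK, h⟩)
    have hpc : IsPreconnected (Icc a b) := isPreconnected_Icc
    have := hpc ((closure (Icc a b \ X m))ᶜ) (⋃ (k) (_ : k ≠ m), (closure (Icc a b \ X k))ᶜ)
      (isClosed_closure.isOpen_compl)
      (isOpen_iUnion fun k => isOpen_iUnion fun _ => isClosed_closure.isOpen_compl)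
      (by
        intro x hx
        obtain ⟨k, hk⟩ := hmem x hx
        by_cases hkm : k = m
        · exact Or.inl (hopen m (hkm ▸ hk))
        · exact Or.inr (mem_iUnion.2 ⟨k, mem_iUnion.2 ⟨hkm, hopen k hk⟩⟩))
      (by
        obtain ⟨xm, hxm⟩ := hm
        exact ⟨xm, hXsub m hxm, hopen m hxm⟩)
      (by
        obtain ⟨xn, hxn⟩ := hn
        exact ⟨xn, hXsub n hxn,
          mem_iUnion.2 ⟨n, mem_iUnion.2 ⟨Ne.symm hmn, hopen n hxn⟩⟩⟩)
    obtain ⟨z, hzK, hzu, hzv⟩ := this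
    obtain ⟨k, hk⟩ := mem_iUnion.1 hzv
    obtain ⟨hkm, hzk⟩ := mem_iUnion.1 hk
    exact (hdisj hkm).le_bot ⟨hKU k z hzK hzk, hKU m z hzK hzu⟩
  · -- Baire category on Fs
    haveI : Nonempty ↥Fs := hFne.to_subtype
    haveI : CompleteSpace ↥Fs := hFsc.completeSpace_coe
    set G : ℕ → Set ↥Fs := fun k => Subtype.val ⁻¹' (F k) with hG
    have hGc : ∀ k, IsClosed (G k) :=
      fun k => ((hclosed k).inter isClosed_closure).preimage continuous_subtype_val
    have hGu : (⋃ k, G k) = univ := by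
      ext p
      simp only [mem_iUnion, mem_univ, iff_true, hG, mem_preimage]
      exact mem_iUnion.1 p.2
    obtain ⟨i, x, hx⟩ := nonempty_interior_of_iUnion_of_closed hGc hGu
    obtain ⟨ε, hε, hball⟩ := Metric.mem_nhds_iff.1 (mem_interior_iff_mem_nhds.1 hx)
    have hxGi : x ∈ G i := interior_subset hx
    have hxXi : (x : ℝ) ∈ X i := hxGi.1
    have hxcl : (x : ℝ) ∈ closure (Icc a b \ X i) := hxGi.2
    -- key: any point of Fs within ε of x lies in X i
    have hkey : ∀ z : ℝ, z ∈ Fs → dist z (x : ℝ) < ε → z ∈ X i := by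
      intro z hz hd
      have : (⟨z, hz⟩ : ↥Fs) ∈ Metric.ball x ε := by
        rw [Metric.mem_ball, Subtype.dist_eq]
        exact hd
      exact (hball this).1
    obtain ⟨y, hy, hdy⟩ := Metric.mem_closure_iff.1 hxcl ε hε
    obtain ⟨p, hp⟩ := hmem y hy.1
    have hpi : p ≠ i := fun h => hy.2 (h ▸ hp)
    have hxK : (x : ℝ) ∈ Icc a b := hXsub i hxXi
    have hxny : (x : ℝ) ≠ y := fun h => hy.2 (h ▸ hxXi)
    have hdy' : |y - (x : ℝ)| < ε := by
      rw [← Real.dist_eq, dist_comm]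
      exact hdy
    rcases lt_or_gt_of_ne hxny with hlt | hgt
    · have hsub : Icc (x : ℝ) y ⊆ Icc a b := Icc_subset_Icc hxK.1 hy.1.2
      have hxp : (x : ℝ) ∉ X p := fun h => (hdisj hpi).le_bot ⟨h, hxXi⟩
      obtain ⟨z, hzIoc, hzXp, hzcl⟩ := aux_inf (hclosed p) hlt hsub hp hxp
      have hzFs : z ∈ Fs := mem_iUnion.2 ⟨p, hzXp, hzcl⟩
      have hdz : dist z (x : ℝ) < ε := by
        rw [Real.dist_eq, abs_lt]
        rw [abs_lt] at hdy'
        constructor <;> [linarith [hzIoc.1]; linarith [hzIoc.2]]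
      exact (hdisj hpi).le_bot ⟨hzXp, hkey z hzFs hdz⟩
    · have hsub : Icc y (x : ℝ) ⊆ Icc a b := Icc_subset_Icc hy.1.1 hxK.2
      have hxp : (x : ℝ) ∉ X p := fun h => (hdisj hpi).le_bot ⟨h, hxXi⟩
      obtain ⟨z, hzIco, hzXp, hzcl⟩ := aux_sup (hclosed p) hgt hsub hp hxp
      have hzFs : z ∈ Fs := mem_iUnion.2 ⟨p, hzXp, hzcl⟩
      have hdz : dist z (x : ℝ) < ε := by
        rw [Real.dist_eq, abs_lt]
        rw [abs_lt] at hdy'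
        constructor <;> [linarith [hzIco.1]; linarith [hzIco.2]]
      exact (hdisj hpi).le_bot ⟨hzXp, hkey z hzFs hdz⟩

/-- Sierpiński: if a non-degenerate compact interval is the union of
countably many pairwise disjoint closed sets, then all but one of them are empty. -/
theorem stmt15 (a b : ℝ) (hab : a < b) (X : ℕ → Set ℝ)
    (hclosed : ∀ n, IsClosed (X n))
    (hdisj : Pairwise (Function.onFun Disjoint X))
    (hcover : Icc a b = ⋃ n, X n) :
    ∃ m : ℕ, Icc a b = X m ∧ ∀ n : ℕ, n ≠ m → X n = ∅ := by
  obtain ⟨m, hm⟩ : ∃ m, a ∈ X m := by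
    have h : a ∈ Icc a b := ⟨le_refl a, le_of_lt hab⟩
    rw [hcover] at h
    exact mem_iUnion.1 h
  have hempty : ∀ n, n ≠ m → X n = ∅ := by
    intro n hn
    by_contra h
    exact two_nonempty_false a b hab X hclosed hdisj hcover m n (Ne.symm hn) ⟨a, hm⟩
      (nonempty_iff_ne_empty.2 h)
  refine ⟨m, Subset.antisymm ?_ ?_, hempty⟩
  · intro x hx
    rw [hcover] at hx
    obtain ⟨k, hk⟩ := mem_iUnion.1 hx
    by_cases hkm : k = m
    · exact hkm ▸ hk
    · rw [hempty k hkm] at hk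
      exact absurd hk (notMem_empty x)
  · intro x hx
    rw [hcover]
    exact mem_iUnion.2 ⟨m, hx⟩
end
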